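/- arXiv:1907.00655 — 3 statements merged into one kernel-verified Lean document; each statement's English description precedes it below -/
import Mathlib

section
/- For a finite set of matrices A_1,...,A_m in R^{n×n} and a strongly connected labeled graph G(V,E) with admissible paths G_k, the limit defining the constrained joint spectral radius, lim_{k→∞} max_{s∈G_k} ‖A_s‖^{1/k}, exists (where A_s denotes the product of matrices along the path s). -/
/-!
Let `b k` be the largest norm of a product `A_s` over the paths `s` of length `k`. A path of
length `k + l` is a path of length `k` followed by one of length `l`, so submultiplicativity of
the norm gives `b (k + l) ≤ b k * b l`. Fekete's lemma in multiplicative form then shows that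
`b k ^ (1 / k)` converges, to its infimum over `k ≥ 1`.
-/

open scoped Classical
open Filter MvPolynomial

/-- The Frobenius norm, a submultiplicative matrix norm. -/
noncomputable def frob {a b : ℕ} (M : Matrix (Fin a) (Fin b) ℝ) : ℝ :=
  Real.sqrt (∑ i, ∑ j, (M i j)^2)

/-- The set `E_k` of paths of length `k` in the labeled graph with edge set `E ⊆ V × V × L`:
sequences of `k` edges of `E` such that the target of each edge is the source of the next. -/
noncomputable def pathSet {V L : Type*} [Fintype V] [Fintype L]
    (E : Finset (V × V × L)) (k : ℕ) : Finset (Fin k → V × V × L) :=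
  Finset.univ.filter (fun s =>
    (∀ i, s i ∈ E) ∧
    ∀ (i : ℕ) (h : i + 1 < k), (s ⟨i, Nat.lt_of_succ_lt h⟩).2.1 = (s ⟨i+1, h⟩).1)

/-- The sequence of labels along a path. -/
def labels {V L : Type*} {k : ℕ} (s : Fin k → V × V × L) : Fin k → L :=
  fun i => (s i).2.2

/-- The product of matrices along a label sequence: `A_s = A_{σ_k} ⋯ A_{σ_1}`. -/
noncomputable def prodA {n : ℕ} {L : Type*} (A : L → Matrix (Fin n) (Fin n) ℝ)
    {k : ℕ} (σ : Fin k → L) : Matrix (Fin n) (Fin n) ℝ :=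
  ((List.ofFn σ).reverse.map A).prod

/-- Maximum of a real-valued function over a (nonempty) finite set. -/
noncomputable def maxOver {α : Type*} (s : Finset α) (f : α → ℝ) : ℝ :=
  sSup (f '' ↑s)

/-- Strong connectivity: every node reaches every node by a path of length ≥ 1. -/
def StronglyConnected {V L : Type*} [Fintype V] [Fintype L]
    (E : Finset (V × V × L)) : Prop :=
  ∀ u v : V, ∃ k : ℕ, ∃ s ∈ pathSet E (k+1), (s 0).1 = u ∧ (s (Fin.last k)).2.1 = v

open Set Topology

section Submultiplicative

variable {b : ℕ → ℝ}

/-- Because of zeros of `b`, `log b` need not be subadditive; Fekete's lemma is applied instead to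
`log (max (b k) ((a / 2) ^ k))`, which is. -/
theorem eventually_rpow_one_div_lt_of_submultiplicative (hb : ∀ k, 0 ≤ b k)
    (h : ∀ k l, b (k + l) ≤ b k * b l) {m : ℕ} (hm : m ≠ 0) {a : ℝ}
    (ha : b m ^ ((1 : ℝ) / m) < a) : ∀ᶠ p in atTop, b p ^ ((1 : ℝ) / p) < a := by
  have ha0 : 0 < a := (Real.rpow_nonneg (hb m) _).trans_lt ha
  set c : ℕ → ℝ := fun k => max (b k) ((a / 2) ^ k)
  have hc_pos : ∀ k, 0 < c k := fun k => lt_max_of_lt_right (by positivity)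
  have hsub : Subadditive fun k => Real.log (c k) := by
    intro k l
    rw [← Real.log_mul (hc_pos k).ne' (hc_pos l).ne']
    refine Real.log_le_log (hc_pos _) (max_le ?_ ?_)
    · exact (h k l).trans (mul_le_mul (le_max_left _ _) (le_max_left _ _) (hb l) (hc_pos k).le)
    · rw [pow_add]
      exact mul_le_mul (le_max_right _ _) (le_max_right _ _) (by positivity) (hc_pos k).le
  have hlog_iff : ∀ k ≠ 0, Real.log (c k) / k < Real.log a ↔ b k ^ ((1 : ℝ) / k) < a := by
    intro k hk
    have hk' : (0 : ℝ) < k := by positivity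
    rw [div_lt_iff₀ hk', mul_comm, ← Real.log_pow,
      Real.log_lt_log_iff (hc_pos k) (by positivity), one_div,
      Real.rpow_inv_lt_iff_of_pos (hb k) ha0.le hk', Real.rpow_natCast, max_lt_iff,
      and_iff_left (pow_lt_pow_left₀ (half_lt_self ha0) (by positivity) hk)]
  filter_upwards [hsub.eventually_div_lt_of_div_lt hm ((hlog_iff m hm).2 ha), eventually_ne_atTop 0]
    with p hp hp0 using (hlog_iff p hp0).1 hp

theorem tendsto_rpow_one_div_of_submultiplicative (hb : ∀ k, 0 ≤ b k)
    (h : ∀ k l, b (k + l) ≤ b k * b l) :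
    Tendsto (fun k : ℕ => b k ^ ((1 : ℝ) / k)) atTop
      (𝓝 (sInf ((fun k : ℕ => b k ^ ((1 : ℝ) / k)) '' Ici 1))) := by
  set f := fun k : ℕ => b k ^ ((1 : ℝ) / k)
  have hne : (f '' Ici 1).Nonempty := nonempty_Ici.image f
  have hbdd : BddBelow (f '' Ici 1) :=
    ⟨0, forall_mem_image.2 fun k _ => Real.rpow_nonneg (hb k) _⟩
  refine tendsto_order.2 ⟨fun l hl => ?_, fun a ha => ?_⟩
  · filter_upwards [eventually_ge_atTop 1] with k hk
      using hl.trans_le (csInf_le hbdd (mem_image_of_mem f hk))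
  · obtain ⟨_, ⟨m, hm, rfl⟩, hma⟩ := exists_lt_of_csInf_lt hne ha
    exact eventually_rpow_one_div_lt_of_submultiplicative hb h (Nat.one_le_iff_ne_zero.1 hm) hma

end Submultiplicative

section MaxOver

variable {α : Type*} {s : Finset α} {f : α → ℝ}

theorem le_maxOver {a : α} (ha : a ∈ s) : f a ≤ maxOver s f :=
  le_csSup (s.finite_toSet.image f).bddAbove (mem_image_of_mem f ha)

theorem maxOver_nonneg (hf : ∀ a, 0 ≤ f a) : 0 ≤ maxOver s f :=
  Real.sSup_nonneg (forall_mem_image.2 fun a _ => hf a)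

theorem maxOver_le {M : ℝ} (h : ∀ a ∈ s, f a ≤ M) (hM : 0 ≤ M) : maxOver s f ≤ M :=
  Real.sSup_le (forall_mem_image.2 h) hM

theorem maxOver_rpow (hf : ∀ a, 0 ≤ f a) {c : ℝ} (hc : 0 < c) :
    maxOver s (fun a => f a ^ c) = maxOver s f ^ c := by
  have hfc : ∀ a, 0 ≤ f a ^ c := fun a => Real.rpow_nonneg (hf a) c
  refine le_antisymm (maxOver_le (fun a ha => ?_) (Real.rpow_nonneg (maxOver_nonneg hf) c)) ?_
  · exact Real.rpow_le_rpow (hf a) (le_maxOver ha) hc.le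
  · rw [← Real.le_rpow_inv_iff_of_pos (maxOver_nonneg hf) (maxOver_nonneg hfc) hc]
    refine maxOver_le (fun a ha => ?_) (Real.rpow_nonneg (maxOver_nonneg hfc) _)
    rw [Real.le_rpow_inv_iff_of_pos (hf a) (maxOver_nonneg hfc) hc]
    exact le_maxOver (f := fun a => f a ^ c) ha

end MaxOver

section Frobenius

attribute [local instance] Matrix.frobeniusSeminormedAddCommGroup

theorem frob_eq_norm {a b : ℕ} (M : Matrix (Fin a) (Fin b) ℝ) : frob M = ‖M‖ := by
  rw [Matrix.frobenius_norm_def, ← Real.sqrt_eq_rpow, frob]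
  simp only [Real.norm_eq_abs, Real.rpow_two, sq_abs]

theorem frob_nonneg {a b : ℕ} (M : Matrix (Fin a) (Fin b) ℝ) : 0 ≤ frob M :=
  Real.sqrt_nonneg _

theorem frob_mul_le {a b c : ℕ} (M : Matrix (Fin a) (Fin b) ℝ)
    (N : Matrix (Fin b) (Fin c) ℝ) :
    frob (M * N) ≤ frob M * frob N := by
  simpa only [frob_eq_norm] using Matrix.frobenius_norm_mul M N

end Frobenius

theorem prodA_add {L : Type*} {n k l : ℕ} (A : L → Matrix (Fin n) (Fin n) ℝ)
    (σ : Fin (k + l) → L) :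
    prodA A σ =
      prodA A (fun i => σ (Fin.natAdd k i)) * prodA A (fun i => σ (Fin.castAdd l i)) := by
  rw [prodA, List.ofFn_add, List.reverse_append, List.map_append, List.prod_append]
  rfl

section Paths

variable {V L : Type*} [Fintype V] [Fintype L]

theorem mem_pathSet {E : Finset (V × V × L)} {k : ℕ} {s : Fin k → V × V × L} :
    s ∈ pathSet E k ↔ (∀ i, s i ∈ E) ∧
      ∀ (i : ℕ) (h : i + 1 < k),
        (s ⟨i, Nat.lt_of_succ_lt h⟩).2.1 = (s ⟨i + 1, h⟩).1 := by
  simp [pathSet]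

theorem castAdd_mem_pathSet {E : Finset (V × V × L)} {k l : ℕ} {s : Fin (k + l) → V × V × L}
    (hs : s ∈ pathSet E (k + l)) :
    (fun i => s (Fin.castAdd l i)) ∈ pathSet E k :=
  mem_pathSet.2 ⟨fun _ => (mem_pathSet.1 hs).1 _, fun i _ => (mem_pathSet.1 hs).2 i (by omega)⟩

theorem natAdd_mem_pathSet {E : Finset (V × V × L)} {k l : ℕ} {s : Fin (k + l) → V × V × L}
    (hs : s ∈ pathSet E (k + l)) :
    (fun i => s (Fin.natAdd k i)) ∈ pathSet E l :=
  mem_pathSet.2 ⟨fun _ => (mem_pathSet.1 hs).1 _,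
    fun i _ => (mem_pathSet.1 hs).2 (k + i) (by omega)⟩

/-- `ρ_k ^ k` in the notation of the paper. -/
noncomputable def maxPathProdNorm {n : ℕ} (A : L → Matrix (Fin n) (Fin n) ℝ)
    (E : Finset (V × V × L)) (k : ℕ) : ℝ :=
  maxOver (pathSet E k) fun s => frob (prodA A (labels s))

variable {n : ℕ} (A : L → Matrix (Fin n) (Fin n) ℝ) (E : Finset (V × V × L))

theorem maxPathProdNorm_nonneg (k : ℕ) : 0 ≤ maxPathProdNorm A E k :=
  maxOver_nonneg fun _ => frob_nonneg _

theorem maxPathProdNorm_add_le (k l : ℕ) :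
    maxPathProdNorm A E (k + l) ≤ maxPathProdNorm A E k * maxPathProdNorm A E l := by
  refine maxOver_le (fun s hs => ?_)
    (mul_nonneg (maxPathProdNorm_nonneg A E k) (maxPathProdNorm_nonneg A E l))
  calc frob (prodA A (labels s))
      ≤ frob (prodA A (labels fun i => s (Fin.natAdd k i)))
        * frob (prodA A (labels fun i => s (Fin.castAdd l i))) := by
        rw [prodA_add]; exact frob_mul_le _ _
    _ ≤ maxPathProdNorm A E l * maxPathProdNorm A E k :=
        mul_le_mul (le_maxOver (f := fun s => frob (prodA A (labels s))) (natAdd_mem_pathSet hs))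
          (le_maxOver (f := fun s => frob (prodA A (labels s))) (castAdd_mem_pathSet hs))
          (frob_nonneg _) (maxPathProdNorm_nonneg A E l)
    _ = maxPathProdNorm A E k * maxPathProdNorm A E l := mul_comm _ _

end Paths

theorem cjsr_limit_exists_general {m n : ℕ} (A : Fin m → Matrix (Fin n) (Fin n) ℝ)
    {V : Type*} [Fintype V] (E : Finset (V × V × Fin m)) :
    ∃ ρ : ℝ, Tendsto
      (fun k : ℕ => maxOver (pathSet E k) (fun s => frob (prodA A (labels s)) ^ ((1:ℝ)/k)))
      atTop (nhds ρ) := by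
  refine ⟨_, (tendsto_rpow_one_div_of_submultiplicative (maxPathProdNorm_nonneg A E)
    (maxPathProdNorm_add_le A E)).congr' ?_⟩
  filter_upwards [eventually_ne_atTop 0] with k hk
  exact (maxOver_rpow (fun _ => frob_nonneg _) (by positivity)).symm

/-- for matrices `A_1,…,A_m ∈ ℝ^{n×n}` and a strongly connected labeled graph
`G(V,E)`, the limit `lim_{k→∞} max_{s ∈ G_k} ‖A_s‖^{1/k}` defining the constrained joint
spectral radius exists. -/
theorem cjsr_limit_exists {m n : ℕ} (A : Fin m → Matrix (Fin n) (Fin n) ℝ)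
    {V : Type*} [Fintype V] [Nonempty V] (E : Finset (V × V × Fin m))
    (hSC : StronglyConnected E) :
    ∃ ρ : ℝ, Tendsto
      (fun k : ℕ => maxOver (pathSet E k) (fun s => frob (prodA A (labels s)) ^ ((1:ℝ)/k)))
      atTop (nhds ρ) :=
  cjsr_limit_exists_general A E
end

section
/- If there exist strictly positive homogeneous polynomials p_v of degree 2d, one per node v of G, and γ̄ > 0 such that p_v(A_σ x) ≤ γ̄^{2d} p_u(x) for all x ∈ R^n and all edges (u,v,σ) ∈ E, then the constrained joint spectral radius satisfies ρ(G,A) ≤ γ̄. -/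
open scoped Classical
open Filter MvPolynomial

open scoped Matrix

/-! Homogeneity and positivity make every `p_v` comparable to `‖·‖ ^ 2d` on the compact unit
sphere, uniformly over the finitely many nodes. Telescoping the Lyapunov inequality along a
path `s` of length `k` then gives `‖A_s x‖ ≤ K γ ^ k ‖x‖`, so `frob A_s ≤ K' γ ^ k` and the
`k`-th roots tend to at most `γ`. -/

theorem MvPolynomial.IsHomogeneous.eval_smul {σ R : Type*} [CommSemiring R]
    {φ : MvPolynomial σ R} {N : ℕ} (hφ : φ.IsHomogeneous N) (c : R) (x : σ → R) :
    eval (c • x) φ = c ^ N * eval x φ := by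
  rw [eval_eq, eval_eq, Finset.mul_sum]
  refine Finset.sum_congr rfl fun e he => ?_
  simp only [Pi.smul_apply, smul_eq_mul, mul_pow, Finset.prod_mul_distrib,
    Finset.prod_pow_eq_pow_sum, ← hφ.degree_eq_sum_deg_support he]
  ring

section Homogeneous

variable {E : Type*} [NormedAddCommGroup E] [NormedSpace ℝ E] {f : E → ℝ} {N : ℕ}

lemma apply_zero_of_homogeneous (hN : N ≠ 0) (hhom : ∀ (t : ℝ) x, f (t • x) = t ^ N * f x) :
    f 0 = 0 := by
  simpa [zero_pow hN] using hhom 0 0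

lemma apply_eq_norm_pow_mul_of_homogeneous (hhom : ∀ (t : ℝ) x, f (t • x) = t ^ N * f x)
    {x : E} (hx : x ≠ 0) : f x = ‖x‖ ^ N * f (‖x‖⁻¹ • x) := by
  conv_lhs => rw [← smul_inv_smul₀ (norm_ne_zero_iff.mpr hx) x]
  exact hhom _ _

lemma inv_norm_smul_mem_unitSphere {x : E} (hx : x ≠ 0) :
    ‖x‖⁻¹ • x ∈ Metric.sphere (0 : E) 1 := by
  rw [mem_sphere_zero_iff_norm, norm_smul, norm_inv, norm_norm,
    inv_mul_cancel₀ (norm_ne_zero_iff.mpr hx)]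

variable [ProperSpace E]

lemma exists_pos_mul_norm_pow_le_of_homogeneous (hf : Continuous f) (hN : N ≠ 0)
    (hhom : ∀ (t : ℝ) x, f (t • x) = t ^ N * f x) (hpos : ∀ x, x ≠ 0 → 0 < f x) :
    ∃ c > 0, ∀ x, c * ‖x‖ ^ N ≤ f x := by
  cases subsingleton_or_nontrivial E with
  | inl _ =>
    refine ⟨1, one_pos, fun x => ?_⟩
    simp [Subsingleton.elim x 0, apply_zero_of_homogeneous hN hhom, zero_pow hN]
  | inr _ =>
    obtain ⟨y₀, hy₀, hmin⟩ := (isCompact_sphere (0 : E) 1).exists_isMinOn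
      (NormedSpace.sphere_nonempty.mpr zero_le_one) hf.continuousOn
    refine ⟨f y₀, hpos y₀ (ne_zero_of_mem_unit_sphere ⟨y₀, hy₀⟩), fun x => ?_⟩
    rcases eq_or_ne x 0 with rfl | hx
    · simp [apply_zero_of_homogeneous hN hhom, zero_pow hN]
    rw [apply_eq_norm_pow_mul_of_homogeneous hhom hx, mul_comm]
    exact mul_le_mul_of_nonneg_left (hmin (inv_norm_smul_mem_unitSphere hx)) (by positivity)

lemma exists_le_mul_norm_pow_of_homogeneous (hf : Continuous f) (hN : N ≠ 0)
    (hhom : ∀ (t : ℝ) x, f (t • x) = t ^ N * f x) :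
    ∃ C, ∀ x, f x ≤ C * ‖x‖ ^ N := by
  obtain ⟨C, hC⟩ := (isCompact_sphere (0 : E) 1).exists_bound_of_continuousOn hf.continuousOn
  refine ⟨C, fun x => ?_⟩
  rcases eq_or_ne x 0 with rfl | hx
  · simp [apply_zero_of_homogeneous hN hhom, zero_pow hN]
  rw [apply_eq_norm_pow_mul_of_homogeneous hhom hx, mul_comm C]
  exact mul_le_mul_of_nonneg_left
    ((Real.le_norm_self _).trans (hC _ (inv_norm_smul_mem_unitSphere hx))) (by positivity)

lemma exists_norm_pow_bounds_of_homogeneous {ι : Type*} [Finite ι] {f : ι → E → ℝ}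
    (hf : ∀ i, Continuous (f i)) (hN : N ≠ 0)
    (hhom : ∀ i (t : ℝ) x, f i (t • x) = t ^ N * f i x) (hpos : ∀ i x, x ≠ 0 → 0 < f i x) :
    ∃ c > 0, ∃ C, ∀ i x, c * ‖x‖ ^ N ≤ f i x ∧ f i x ≤ C * ‖x‖ ^ N := by
  choose c hc hcle using fun i =>
    exists_pos_mul_norm_pow_le_of_homogeneous (hf i) hN (hhom i) (hpos i)
  choose C hCle using fun i => exists_le_mul_norm_pow_of_homogeneous (hf i) hN (hhom i)
  obtain ⟨c₀, hc₀, hc₀le⟩ : ∃ c₀ > 0, ∀ i, c₀ ≤ c i := by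
    cases isEmpty_or_nonempty ι with
    | inl _ => exact ⟨1, one_pos, isEmptyElim⟩
    | inr _ =>
      obtain ⟨i₀, hi₀⟩ := Finite.exists_min c
      exact ⟨c i₀, hc i₀, hi₀⟩
  obtain ⟨C₀, hC₀⟩ := Finite.bddAbove_range C
  refine ⟨c₀, hc₀, C₀, fun i x => ⟨?_, ?_⟩⟩
  · exact (mul_le_mul_of_nonneg_right (hc₀le i) (by positivity)).trans (hcle i x)
  · exact (hCle i x).trans
      (mul_le_mul_of_nonneg_right (hC₀ (Set.mem_range_self i)) (by positivity))

end Homogeneous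

lemma prodA_succ {n : ℕ} {L : Type*} (A : L → Matrix (Fin n) (Fin n) ℝ) {k : ℕ}
    (σ : Fin (k + 1) → L) : prodA A σ = prodA A (Fin.tail σ) * A (σ 0) := by
  simp [prodA, List.ofFn_succ, Fin.tail_def]

section Paths

variable {V L : Type*} [Fintype V] [Fintype L] {E : Finset (V × V × L)} {k : ℕ}

lemma apply_mem_of_mem_pathSet {s : Fin k → V × V × L} (hs : s ∈ pathSet E k) (i : Fin k) :
    s i ∈ E :=
  (Finset.mem_filter.mp hs).2.1 i

lemma target_zero_eq_source_one_of_mem_pathSet {s : Fin (k + 2) → V × V × L}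
    (hs : s ∈ pathSet E (k + 2)) : (s 0).2.1 = (s 1).1 :=
  (Finset.mem_filter.mp hs).2.2 0 (by omega)

lemma tail_mem_pathSet {s : Fin (k + 2) → V × V × L} (hs : s ∈ pathSet E (k + 2)) :
    Fin.tail s ∈ pathSet E (k + 1) := by
  refine Finset.mem_filter.mpr ⟨Finset.mem_univ _, fun i => apply_mem_of_mem_pathSet hs _,
    fun i hi => ?_⟩
  exact (Finset.mem_filter.mp hs).2.2 (i + 1) (by omega)

lemma apply_prodA_mulVec_le_of_mem_pathSet {n : ℕ} {A : L → Matrix (Fin n) (Fin n) ℝ}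
    {f : V → (Fin n → ℝ) → ℝ} {a : ℝ} (ha : 0 ≤ a)
    (hf : ∀ e ∈ E, ∀ x, f e.2.1 (A e.2.2 *ᵥ x) ≤ a * f e.1 x) :
    ∀ {k : ℕ} {s : Fin (k + 1) → V × V × L}, s ∈ pathSet E (k + 1) → ∀ x,
      f (s (Fin.last k)).2.1 (prodA A (labels s) *ᵥ x) ≤ a ^ (k + 1) * f (s 0).1 x
  | 0, s, hs, x => by
    simpa [prodA, labels] using hf (s 0) (apply_mem_of_mem_pathSet hs 0) x
  | k + 1, s, hs, x => by
    have htail := apply_prodA_mulVec_le_of_mem_pathSet ha hf (tail_mem_pathSet hs)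
      (A (s 0).2.2 *ᵥ x)
    rw [Matrix.mulVec_mulVec] at htail
    calc f (s (Fin.last (k + 1))).2.1 (prodA A (labels s) *ᵥ x)
        ≤ a ^ (k + 1) * f (s 0).2.1 (A (s 0).2.2 *ᵥ x) := by
          rw [prodA_succ, target_zero_eq_source_one_of_mem_pathSet hs]
          exact htail
      _ ≤ a ^ (k + 1) * (a * f (s 0).1 x) :=
          mul_le_mul_of_nonneg_left (hf _ (apply_mem_of_mem_pathSet hs 0) x) (by positivity)
      _ = a ^ (k + 1 + 1) * f (s 0).1 x := by ring

end Paths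

lemma frob_le_of_norm_mulVec_le {a b : ℕ} (M : Matrix (Fin a) (Fin b) ℝ) {B : ℝ} (hB : 0 ≤ B)
    (h : ∀ x, ‖M *ᵥ x‖ ≤ B * ‖x‖) : frob M ≤ Real.sqrt (a * b) * B := by
  have hentry : ∀ i j, (M i j) ^ 2 ≤ B ^ 2 := by
    intro i j
    have hcol : ‖M *ᵥ Pi.single j 1‖ ≤ B := by
      simpa [Pi.norm_single] using h (Pi.single j 1)
    have : |M i j| ≤ B := by
      simpa [Matrix.mulVec_single] using (norm_le_pi_norm (M *ᵥ Pi.single j 1) i).trans hcol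
    exact sq_le_sq' (abs_le.mp this).1 (abs_le.mp this).2
  calc frob M ≤ Real.sqrt (∑ _i : Fin a, ∑ _j : Fin b, B ^ 2) :=
        Real.sqrt_le_sqrt (Finset.sum_le_sum fun i _ => Finset.sum_le_sum fun j _ => hentry i j)
    _ = Real.sqrt (a * b) * B := by
        simp [Real.sqrt_sq hB, mul_assoc]

lemma maxOver_le_s8 {α : Type*} {s : Finset α} {f : α → ℝ} {b : ℝ} (hb : 0 ≤ b)
    (h : ∀ a ∈ s, f a ≤ b) : maxOver s f ≤ b :=
  Real.sSup_le (by rintro _ ⟨a, ha, rfl⟩; exact h a ha) hb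

lemma le_of_tendsto_maxOver_of_le_mul_pow {α : ℕ → Type*} {S : ∀ k, Finset (α k)}
    {g : ∀ k, α k → ℝ} (hg : ∀ k s, 0 ≤ g k s) {C γ ρ : ℝ} (hγ : 0 ≤ γ)
    (hbound : ∀ k, ∀ s ∈ S (k + 1), g (k + 1) s ≤ C * γ ^ (k + 1))
    (hρ : Tendsto (fun k : ℕ => maxOver (S k) (fun s => g k s ^ ((1 : ℝ) / k))) atTop (nhds ρ)) :
    ρ ≤ γ := by
  -- a positive base makes `C₁ ^ (1 / k) → 1`
  set C₁ := max C 1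
  have hC₁ : 0 < C₁ := zero_lt_one.trans_le (le_max_right _ _)
  have hlim : Tendsto (fun k : ℕ => C₁ ^ ((1 : ℝ) / k) * γ) atTop (nhds γ) := by
    simpa using (tendsto_const_nhds.rpow tendsto_one_div_atTop_nhds_zero_nat
      (Or.inl hC₁.ne')).mul_const γ
  refine le_of_tendsto_of_tendsto hρ hlim ?_
  filter_upwards [eventually_ge_atTop 1] with k hk
  obtain ⟨k, rfl⟩ : ∃ k', k = k' + 1 := ⟨k - 1, by omega⟩
  refine maxOver_le_s8 (by positivity) fun s hs => ?_
  calc g (k + 1) s ^ ((1 : ℝ) / (k + 1 : ℕ))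
      ≤ (C₁ * γ ^ (k + 1)) ^ ((1 : ℝ) / (k + 1 : ℕ)) := by
        refine Real.rpow_le_rpow (hg _ _) ((hbound k s hs).trans ?_) (by positivity)
        exact mul_le_mul_of_nonneg_right (le_max_left _ _) (by positivity)
    _ = C₁ ^ ((1 : ℝ) / (k + 1 : ℕ)) * γ := by
        rw [Real.mul_rpow hC₁.le (by positivity), one_div,
          Real.pow_rpow_inv_natCast hγ (Nat.succ_ne_zero k)]

lemma le_max_one_div_mul_of_mul_pow_le {a b c C : ℝ} {N : ℕ} (hb : 0 ≤ b)
    (hc : 0 < c) (hN : N ≠ 0) (h : c * a ^ N ≤ C * b ^ N) : a ≤ max 1 (C / c) * b := by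
  refine le_of_pow_le_pow_left₀ hN (by positivity) ?_
  calc a ^ N ≤ C / c * b ^ N := by
        rw [div_mul_eq_mul_div, le_div_iff₀ hc]
        linarith
    _ ≤ max 1 (C / c) ^ N * b ^ N := by
        gcongr
        exact (le_max_right _ _).trans (le_self_pow₀ (le_max_left _ _) hN)
    _ = (max 1 (C / c) * b) ^ N := (mul_pow _ _ _).symm

theorem lyapunov_cjsr_upper_bound_general {m n : ℕ} (A : Fin m → Matrix (Fin n) (Fin n) ℝ)
    {V : Type*} [Fintype V] (E : Finset (V × V × Fin m))
    (d : ℕ) (hd : 0 < d) (P : V → MvPolynomial (Fin n) ℝ)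
    (hhom : ∀ v, (P v).IsHomogeneous (2 * d))
    (hpos : ∀ v (x : Fin n → ℝ), x ≠ 0 → 0 < MvPolynomial.eval x (P v))
    (γ : ℝ) (hγ : 0 < γ)
    (hlyap : ∀ e ∈ E, ∀ x : Fin n → ℝ,
      MvPolynomial.eval ((A e.2.2).mulVec x) (P e.2.1)
        ≤ γ ^ (2 * d) * MvPolynomial.eval x (P e.1))
    (ρ : ℝ)
    (hρ : Tendsto (fun k : ℕ =>
        maxOver (pathSet E k) (fun s => frob (prodA A (labels s)) ^ ((1:ℝ)/k)))
      atTop (nhds ρ)) :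
    ρ ≤ γ := by
  have hN : 2 * d ≠ 0 := by omega
  obtain ⟨c, hc, C, hbounds⟩ := exists_norm_pow_bounds_of_homogeneous
    (f := fun v x => eval x (P v)) (fun v => continuous_eval _) hN
    (fun v => (hhom v).eval_smul) hpos
  refine le_of_tendsto_maxOver_of_le_mul_pow (fun _ _ => Real.sqrt_nonneg _) hγ.le
    (C := Real.sqrt (n * n) * max 1 (C / c)) (fun k s hs => ?_) hρ
  rw [mul_assoc]
  refine frob_le_of_norm_mulVec_le _ (by positivity) fun x => ?_
  rw [mul_assoc]
  refine le_max_one_div_mul_of_mul_pow_le (by positivity) hc hN ?_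
  calc c * ‖prodA A (labels s) *ᵥ x‖ ^ (2 * d)
      ≤ eval (prodA A (labels s) *ᵥ x) (P (s (Fin.last k)).2.1) := (hbounds _ _).1
    _ ≤ (γ ^ (2 * d)) ^ (k + 1) * eval x (P (s 0).1) :=
        apply_prodA_mulVec_le_of_mem_pathSet (f := fun v x => eval x (P v)) (by positivity)
          hlyap hs x
    _ ≤ (γ ^ (2 * d)) ^ (k + 1) * (C * ‖x‖ ^ (2 * d)) :=
        mul_le_mul_of_nonneg_left (hbounds _ _).2 (by positivity)
    _ = C * (γ ^ (k + 1) * ‖x‖) ^ (2 * d) := by ring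

/-- if there exist strictly positive homogeneous polynomials `p_v` of degree
`2d` (one per node) and `γ̄ > 0` with `p_v(A_σ x) ≤ γ̄^{2d} p_u(x)` for every edge
`(u,v,σ) ∈ E` and every `x`, then `ρ(G,A) ≤ γ̄`. -/
theorem lyapunov_cjsr_upper_bound {m n : ℕ} (A : Fin m → Matrix (Fin n) (Fin n) ℝ)
    {V : Type*} [Fintype V] (E : Finset (V × V × Fin m)) (hSC : StronglyConnected E)
    (d : ℕ) (hd : 0 < d) (P : V → MvPolynomial (Fin n) ℝ)
    (hhom : ∀ v, (P v).IsHomogeneous (2 * d))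
    (hpos : ∀ v (x : Fin n → ℝ), x ≠ 0 → 0 < MvPolynomial.eval x (P v))
    (γ : ℝ) (hγ : 0 < γ)
    (hlyap : ∀ e ∈ E, ∀ x : Fin n → ℝ,
      MvPolynomial.eval ((A e.2.2).mulVec x) (P e.2.1)
        ≤ γ ^ (2 * d) * MvPolynomial.eval x (P e.1))
    (ρ : ℝ)
    (hρ : Tendsto (fun k : ℕ =>
        maxOver (pathSet E k) (fun s => frob (prodA A (labels s)) ^ ((1:ℝ)/k)))
      atTop (nhds ρ)) :
    ρ ≤ γ :=
  lyapunov_cjsr_upper_bound_general A E d hd P hhom hpos γ hγ hlyap ρ hρ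
end

section
/- Fix τ > 0 and homogeneous degree-2d polynomials q_v in the interior of the SOS cone. Define the iteration p_{v,0} = 0 and p_{v,k+1}(x) = q_v(x) + (1/τ) Σ_{(u,v,σ)∈E} p_{u,k}(A_σ x). If the iteration converges (coefficient-wise) to polynomials p_{v,∞}, then each p_{v,∞} is a sum of squares, each p_{v,∞} lies in the interior of the SOS cone, and for every edge (u,v,σ) ∈ E the polynomial τ·p_{v,∞}(x) − p_{u,∞}(A_σ x) is a sum of squares. -/
open scoped Classical
open Filter MvPolynomial

/-- A polynomial is a sum of squares. -/
def IsSOS {n : ℕ} (p : MvPolynomial (Fin n) ℝ) : Prop :=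
  ∃ s : Multiset (MvPolynomial (Fin n) ℝ), p = (s.map (fun q => q ^ 2)).sum

/-- Membership in the interior of the SOS cone (within homogeneous forms of degree `2d`):
`p - ε‖x‖^{2d}` is SOS for some `ε > 0`, where `‖x‖^{2d} = (Σᵢ xᵢ²)^d` is an interior
point of the cone. -/
def InIntSOS {n : ℕ} (d : ℕ) (p : MvPolynomial (Fin n) ℝ) : Prop :=
  ∃ ε : ℝ, 0 < ε ∧
    IsSOS (p - MvPolynomial.C ε * (∑ i, MvPolynomial.X i ^ 2) ^ d)

/-- Substitution `p(x) ↦ p(Bx)`. -/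
noncomputable def substMat {n : ℕ} (B : Matrix (Fin n) (Fin n) ℝ)
    (p : MvPolynomial (Fin n) ℝ) : MvPolynomial (Fin n) ℝ :=
  MvPolynomial.aeval (fun i => ∑ j, MvPolynomial.C (B i j) * MvPolynomial.X j) p

/-!
The forms `q_v - ε_v ‖x‖^{2d}` being SOS, an induction shows that every `P k v` is a homogeneous
SOS form of degree `2d` with `P (k+1) v - ε_v ‖x‖^{2d}` and
`τ P (k+1) v - P k u ∘ A_σ - τ ε_v ‖x‖^{2d}` SOS. Closedness of the SOS cone is avoided by
giving up half of the margin in the limit: if `p` is homogeneous of degree `2d` and the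
coefficients of `p` have `ℓ¹`-norm at most `c`, then `c ‖x‖^{2d} + p` is SOS, because each
monomial `x^(β+γ)` with `|β| = |γ| = d` satisfies `±2 x^β x^γ ≤ x^{2β} + x^{2γ} ≤ 2 ‖x‖^{2d}`
in the SOS order. Coefficientwise convergence makes that norm of `p_∞ - p_k` small.
-/

open Topology

section SumSq

variable {R : Type*} [CommRing R]

theorem IsSumSq.map {S F : Type*} [CommRing S] [FunLike F R S] [RingHomClass F R S] (f : F)
    {x : R} (hx : IsSumSq x) : IsSumSq (f x) := by
  induction hx with
  | zero => simp
  | sq_add a _ ih => simpa using (IsSumSq.mul_self (f a)).add ih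

theorem IsSumSq.sq (a : R) : IsSumSq (a ^ 2) := (IsSquare.sq a).isSumSq

theorem IsSumSq.pow {x : R} (hx : IsSumSq x) (k : ℕ) : IsSumSq (x ^ k) := by
  simpa using pow_mem (Subsemiring.mem_sumSq.mpr hx) k

theorem isSumSq_sum_sq_sub_sq {ι : Type*} [Fintype ι] [DecidableEq ι] (a : ι → R) (i : ι) :
    IsSumSq (∑ j, a j ^ 2 - a i ^ 2) := by
  rw [← Finset.add_sum_erase _ _ (Finset.mem_univ i), add_sub_cancel_left]
  exact IsSumSq.sum_sq _ _

theorem isSumSq_pow_sub_pow {x y : R} (hx : IsSumSq x) (hy : IsSumSq y) (hxy : IsSumSq (x - y))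
    (k : ℕ) : IsSumSq (x ^ k - y ^ k) := by
  rw [← geom_sum₂_mul]
  exact (IsSumSq.sum fun j _ => (hx.pow j).mul (hy.pow _)).mul hxy

theorem isSumSq_sum_sq_pow_degree_sub_sq_prod {ι : Type*} [Fintype ι] (a : ι → R)
    (β : ι →₀ ℕ) : IsSumSq ((∑ i, a i ^ 2) ^ β.degree - (β.prod fun i k => a i ^ k) ^ 2) := by
  have hS : IsSumSq (∑ i, a i ^ 2) := IsSumSq.sum_sq _ _
  induction β using Finsupp.induction_linear with
  | zero => simp
  | add f g hf hg =>
    rw [map_add, Finsupp.prod_add_index' (fun _ => pow_zero _) (fun _ => pow_add _)]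
    have key : (∑ i, a i ^ 2) ^ (f.degree + g.degree)
          - ((f.prod fun i k => a i ^ k) * (g.prod fun i k => a i ^ k)) ^ 2
        = (∑ i, a i ^ 2) ^ f.degree
            * ((∑ i, a i ^ 2) ^ g.degree - (g.prod fun i k => a i ^ k) ^ 2)
          + (g.prod fun i k => a i ^ k) ^ 2
            * ((∑ i, a i ^ 2) ^ f.degree - (f.prod fun i k => a i ^ k) ^ 2) := by
      ring
    rw [key]
    exact ((hS.pow _).mul hg).add ((IsSumSq.sq _).mul hf)
  | single i k =>
    rw [Finsupp.degree_single, Finsupp.prod_single_index (h := fun i k => a i ^ k) (pow_zero _),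
      ← pow_mul, mul_comm, pow_mul]
    exact isSumSq_pow_sub_pow hS (IsSumSq.sq _) (isSumSq_sum_sq_sub_sq a i) k

end SumSq

theorem isSOS_iff_isSumSq {n : ℕ} {p : MvPolynomial (Fin n) ℝ} : IsSOS p ↔ IsSumSq p := by
  constructor
  · rintro ⟨s, rfl⟩
    induction s using Multiset.induction_on with
    | empty => simp
    | cons a s ih => simpa using (IsSumSq.sq a).add ih
  · intro h
    induction h with
    | zero => exact ⟨0, by simp⟩
    | sq_add a _ ih =>
      obtain ⟨s, rfl⟩ := ih
      exact ⟨a ::ₘ s, by simp [sq]⟩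

section Polynomial

variable {σ : Type*}

theorem isSumSq_C_mul {c : ℝ} (hc : 0 ≤ c) {p : MvPolynomial σ ℝ} (hp : IsSumSq p) :
    IsSumSq (C c * p) := by
  rw [← Real.sq_sqrt hc, map_pow]
  exact (IsSumSq.sq _).mul hp

theorem isSumSq_C_mul_sq_add_sq_add_C_mul {c ε : ℝ} (h : |c| ≤ ε) (a b : MvPolynomial σ ℝ) :
    IsSumSq (C ε * (a ^ 2 + b ^ 2) + C (2 * c) * (a * b)) := by
  have hab : IsSumSq (a ^ 2 + b ^ 2) := (IsSumSq.sq a).add (IsSumSq.sq b)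
  rcases le_total 0 c with hc | hc
  · have key : C ε * (a ^ 2 + b ^ 2) + C (2 * c) * (a * b)
        = C c * (a + b) ^ 2 + C (ε - c) * (a ^ 2 + b ^ 2) := by
      simp only [map_mul, map_sub, map_ofNat]
      ring
    rw [key]
    exact (isSumSq_C_mul hc (IsSumSq.sq _)).add
      (isSumSq_C_mul (by linarith [le_abs_self c]) hab)
  · have key : C ε * (a ^ 2 + b ^ 2) + C (2 * c) * (a * b)
        = C (-c) * (a - b) ^ 2 + C (ε + c) * (a ^ 2 + b ^ 2) := by
      simp only [map_mul, map_add, map_neg, map_ofNat]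
      ring
    rw [key]
    exact (isSumSq_C_mul (neg_nonneg.mpr hc) (IsSumSq.sq _)).add
      (isSumSq_C_mul (by linarith [neg_abs_le c]) hab)

variable [Fintype σ]

theorem isSumSq_sum_X_sq_pow (d : ℕ) : IsSumSq ((∑ i, X i ^ 2 : MvPolynomial σ ℝ) ^ d) :=
  (IsSumSq.sum_sq _ _).pow d

theorem isSumSq_C_mul_sum_X_sq_pow_add_monomial {d : ℕ} {α : σ →₀ ℕ} (hα : α.degree = 2 * d)
    {c ε : ℝ} (h : |c| ≤ ε) : IsSumSq (C ε * (∑ i, X i ^ 2) ^ d + monomial α c) := by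
  obtain ⟨β, hβα, hβ⟩ := α.exists_le_degree_eq d (by omega)
  obtain ⟨γ, rfl⟩ := le_iff_exists_add.mp hβα
  have hγ : γ.degree = d := by rw [map_add] at hα; omega
  set S : MvPolynomial σ ℝ := ∑ i, X i ^ 2
  set xβ : MvPolynomial σ ℝ := β.prod fun i k => X i ^ k
  set xγ : MvPolynomial σ ℝ := γ.prod fun i k => X i ^ k
  have hSβ : IsSumSq (S ^ d - xβ ^ 2) := hβ ▸ isSumSq_sum_sq_pow_degree_sub_sq_prod X β
  have hSγ : IsSumSq (S ^ d - xγ ^ 2) := hγ ▸ isSumSq_sum_sq_pow_degree_sub_sq_prod X γ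
  have key : C ε * S ^ d + monomial (β + γ) c
      = C (ε / 2) * (S ^ d - xβ ^ 2) + C (ε / 2) * (S ^ d - xγ ^ 2)
        + (C (ε / 2) * (xβ ^ 2 + xγ ^ 2) + C (2 * (c / 2)) * (xβ * xγ)) := by
    have hprod : ((β + γ).prod fun i k => X i ^ k) = xβ * xγ :=
      Finsupp.prod_add_index' (fun _ => pow_zero _) (fun _ => pow_add _)
    have hε : (C ε : MvPolynomial σ ℝ) = C (ε / 2) + C (ε / 2) := by rw [← map_add, add_halves]
    rw [mul_div_cancel₀ c two_ne_zero, monomial_eq, hprod]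
    linear_combination S ^ d * hε
  rw [key]
  have hε : 0 ≤ ε / 2 := by linarith [abs_nonneg c]
  exact ((isSumSq_C_mul hε hSβ).add (isSumSq_C_mul hε hSγ)).add
    (isSumSq_C_mul_sq_add_sq_add_C_mul (by rw [abs_div, abs_two]; linarith) _ _)

theorem isSumSq_C_mul_sum_X_sq_pow_add {d : ℕ} {p : MvPolynomial σ ℝ}
    (hp : p.IsHomogeneous (2 * d)) {ε : ℝ} (h : ∑ α ∈ p.support, |coeff α p| ≤ ε) :
    IsSumSq (C ε * (∑ i, X i ^ 2) ^ d + p) := by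
  have key : C ε * (∑ i, X i ^ 2) ^ d + p
      = ∑ α ∈ p.support, (C |coeff α p| * (∑ i, X i ^ 2) ^ d + monomial α (coeff α p))
        + C (ε - ∑ α ∈ p.support, |coeff α p|) * (∑ i, X i ^ 2) ^ d := by
    conv_lhs => rw [p.as_sum]
    rw [Finset.sum_add_distrib, ← Finset.sum_mul, ← map_sum, map_sub]
    ring
  rw [key]
  exact (IsSumSq.sum fun α hα => isSumSq_C_mul_sum_X_sq_pow_add_monomial
    (hp.degree_eq_sum_deg_support hα).symm le_rfl).add
    (isSumSq_C_mul (sub_nonneg.mpr h) (isSumSq_sum_X_sq_pow d))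

end Polynomial

noncomputable def monomialsOfDegree (σ : Type*) [Finite σ] (n : ℕ) : Finset (σ →₀ ℕ) :=
  (Finsupp.finite_of_degree_eq n).toFinset

theorem MvPolynomial.IsHomogeneous.support_subset_monomialsOfDegree {σ R : Type*} [Finite σ]
    [CommSemiring R] {n : ℕ} {q : MvPolynomial σ R} (hq : q.IsHomogeneous n) :
    q.support ⊆ monomialsOfDegree σ n := fun _ hα => by
  simpa [monomialsOfDegree, Finsupp.degree_apply] using (hq.degree_eq_sum_deg_support hα).symm

theorem coeff_linearMap_eq_sum {σ τ R : Type*} [CommSemiring R]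
    (φ : MvPolynomial σ R →ₗ[R] MvPolynomial τ R) {T : Finset (σ →₀ ℕ)} {q : MvPolynomial σ R}
    (hq : q.support ⊆ T) (β : τ →₀ ℕ) :
    coeff β (φ q) = ∑ α ∈ T, coeff α q * coeff β (φ (monomial α 1)) := by
  conv_lhs => rw [q.as_sum]
  rw [Finset.sum_subset hq fun α _ hα => by rw [notMem_support_iff.mp hα, map_zero], map_sum,
    coeff_sum]
  refine Finset.sum_congr rfl fun α _ => ?_
  have hα : monomial α (coeff α q) = coeff α q • monomial α (1 : R) := by
    rw [smul_monomial, smul_eq_mul, mul_one]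
  rw [hα, map_smul, coeff_smul, smul_eq_mul]

section CoeffConvergence

variable {ι σ R : Type*} [CommRing R] [TopologicalSpace R]

def TendstoCoeff (F : ι → MvPolynomial σ R) (l : Filter ι) (f : MvPolynomial σ R) : Prop :=
  ∀ α, Tendsto (fun k => coeff α (F k)) l (𝓝 (coeff α f))

variable {F : ι → MvPolynomial σ R} {l : Filter ι} {f : MvPolynomial σ R}

theorem TendstoCoeff.comp {ι' : Type*} {l' : Filter ι'} {g : ι' → ι} (h : TendstoCoeff F l f)
    (hg : Tendsto g l' l) : TendstoCoeff (fun k => F (g k)) l' f :=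
  fun α => (h α).comp hg

theorem TendstoCoeff.sub [IsTopologicalRing R] {G : ι → MvPolynomial σ R}
    {g : MvPolynomial σ R} (h : TendstoCoeff F l f) (h' : TendstoCoeff G l g) :
    TendstoCoeff (fun k => F k - G k) l (f - g) := by
  intro α
  simpa only [coeff_sub] using (h α).sub (h' α)

theorem TendstoCoeff.C_mul [IsTopologicalRing R] (h : TendstoCoeff F l f) (r : R) :
    TendstoCoeff (fun k => C r * F k) l (C r * f) := by
  intro α
  simpa only [coeff_C_mul] using (h α).const_mul r

theorem TendstoCoeff.isHomogeneous [T2Space R] [l.NeBot] {n : ℕ} (h : TendstoCoeff F l f)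
    (hF : ∀ k, (F k).IsHomogeneous n) : f.IsHomogeneous n := by
  intro α hα
  rw [Pi.one_def, ← Finsupp.degree_eq_weight_one]
  by_contra hne
  refine hα (tendsto_nhds_unique (h α) ?_)
  simpa only [(hF _).coeff_eq_zero hne] using tendsto_const_nhds

theorem TendstoCoeff.linearMap [Finite σ] [IsTopologicalRing R] [T2Space R] [l.NeBot] {n : ℕ}
    {τ : Type*} (φ : MvPolynomial σ R →ₗ[R] MvPolynomial τ R) (h : TendstoCoeff F l f)
    (hF : ∀ k, (F k).IsHomogeneous n) : TendstoCoeff (fun k => φ (F k)) l (φ f) := by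
  intro β
  have hf := (h.isHomogeneous hF).support_subset_monomialsOfDegree
  simp only [coeff_linearMap_eq_sum φ (hF _).support_subset_monomialsOfDegree,
    coeff_linearMap_eq_sum φ hf]
  exact tendsto_finsetSum _ fun α _ => (h α).mul_const _

end CoeffConvergence

theorem isSumSq_of_isSumSq_sub_C_mul {σ : Type*} [Fintype σ] {d : ℕ} {p : MvPolynomial σ ℝ}
    {c : ℝ} (hc : 0 ≤ c) (h : IsSumSq (p - C c * (∑ i, X i ^ 2) ^ d)) : IsSumSq p := by
  simpa using h.add (isSumSq_C_mul hc (isSumSq_sum_X_sq_pow d))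

theorem TendstoCoeff.isSumSq_sub_C_mul {ι σ : Type*} [Fintype σ] {l : Filter ι} [l.NeBot]
    {F : ι → MvPolynomial σ ℝ} {f : MvPolynomial σ ℝ} {d : ℕ} (h : TendstoCoeff F l f)
    (hF : ∀ k, (F k).IsHomogeneous (2 * d)) {c : ℝ} (hc : 0 < c)
    (hFc : ∀ k, IsSumSq (F k - C c * (∑ i, X i ^ 2) ^ d)) :
    IsSumSq (f - C (c / 2) * (∑ i, X i ^ 2) ^ d) := by
  set T := monomialsOfDegree σ (2 * d)
  have hsmall : ∀ᶠ k in l, ∑ α ∈ T, |coeff α (f - F k)| < c / 2 := by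
    have h0 : Tendsto (fun k => ∑ α ∈ T, |coeff α (f - F k)|) l (𝓝 0) := by
      simpa using tendsto_finsetSum T fun α _ => ((h α).const_sub (coeff α f)).abs
    exact h0.eventually (gt_mem_nhds (half_pos hc))
  obtain ⟨k, hk⟩ := hsmall.exists
  have hhom : (f - F k).IsHomogeneous (2 * d) := (h.isHomogeneous hF).sub (hF k)
  have hsum : ∑ α ∈ (f - F k).support, |coeff α (f - F k)| ≤ c / 2 :=
    (Finset.sum_le_sum_of_subset_of_nonneg hhom.support_subset_monomialsOfDegree
      fun _ _ _ => abs_nonneg _).trans hk.le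
  have hC : (C c : MvPolynomial σ ℝ) = C (c / 2) + C (c / 2) := by rw [← map_add, add_halves]
  have key : f - C (c / 2) * (∑ i, X i ^ 2) ^ d
      = (F k - C c * (∑ i, X i ^ 2) ^ d) + (C (c / 2) * (∑ i, X i ^ 2) ^ d + (f - F k)) := by
    linear_combination (∑ i, X i ^ 2 : MvPolynomial σ ℝ) ^ d * hC
  rw [key]
  exact (hFc k).add (isSumSq_C_mul_sum_X_sq_pow_add hhom hsum)

theorem inIntSOS_iff {n d : ℕ} {p : MvPolynomial (Fin n) ℝ} :
    InIntSOS d p ↔ ∃ ε, 0 < ε ∧ IsSumSq (p - C ε * (∑ i, X i ^ 2) ^ d) := by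
  simp only [InIntSOS, isSOS_iff_isSumSq]

theorem InIntSOS.isSOS {n d : ℕ} {p : MvPolynomial (Fin n) ℝ} (h : InIntSOS d p) : IsSOS p := by
  obtain ⟨ε, hε, hp⟩ := inIntSOS_iff.mp h
  exact isSOS_iff_isSumSq.mpr (isSumSq_of_isSumSq_sub_C_mul hε.le hp)

section SubstMat

variable {n : ℕ} (B : Matrix (Fin n) (Fin n) ℝ)

noncomputable def substMatLinearMap : MvPolynomial (Fin n) ℝ →ₗ[ℝ] MvPolynomial (Fin n) ℝ :=
  (aeval fun i => ∑ j, C (B i j) * X j).toLinearMap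

theorem MvPolynomial.IsHomogeneous.substMat {p : MvPolynomial (Fin n) ℝ} {k : ℕ}
    (hp : p.IsHomogeneous k) : (substMat B p).IsHomogeneous k := by
  have h := hp.aeval (fun i => ∑ j, C (B i j) * X j)
    fun i => IsHomogeneous.sum _ _ _ fun j _ => isHomogeneous_C_mul_X (B i j) j
  rwa [one_mul] at h

theorem IsSumSq.substMat {p : MvPolynomial (Fin n) ℝ} (hp : IsSumSq p) :
    IsSumSq (substMat B p) :=
  hp.map (aeval _)

end SubstMat

section Iteration

variable {m n : ℕ} (A : Fin m → Matrix (Fin n) (Fin n) ℝ) {V : Type*}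
  (E : Finset (V × V × Fin m)) (τ : ℝ) (q : V → MvPolynomial (Fin n) ℝ)

noncomputable def iterationStep (p : V → MvPolynomial (Fin n) ℝ) (v : V) :
    MvPolynomial (Fin n) ℝ :=
  q v + C τ⁻¹ * ∑ e ∈ E.filter (fun e => e.2.1 = v), substMat (A e.2.2) (p e.1)

variable {A E τ q}

theorem iterationStep_isHomogeneous {k : ℕ} (hq : ∀ v, (q v).IsHomogeneous k)
    {p : V → MvPolynomial (Fin n) ℝ} (hp : ∀ u, (p u).IsHomogeneous k) (v : V) :
    (iterationStep A E τ q p v).IsHomogeneous k :=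
  (hq v).add ((IsHomogeneous.sum _ _ _ fun e _ => (hp e.1).substMat _).C_mul _)

theorem isSumSq_iterationStep_sub (hτ : 0 ≤ τ) {p : V → MvPolynomial (Fin n) ℝ}
    (hp : ∀ u, IsSumSq (p u)) {v : V} {r : MvPolynomial (Fin n) ℝ} (hq : IsSumSq (q v - r)) :
    IsSumSq (iterationStep A E τ q p v - r) := by
  rw [iterationStep, add_sub_right_comm]
  exact hq.add (isSumSq_C_mul (inv_nonneg.mpr hτ) (IsSumSq.sum fun e _ => (hp e.1).substMat _))

theorem isSumSq_C_mul_iterationStep_sub_substMat (hτ : 0 < τ) {p : V → MvPolynomial (Fin n) ℝ}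
    (hp : ∀ u, IsSumSq (p u)) {e : V × V × Fin m} (he : e ∈ E) {r : MvPolynomial (Fin n) ℝ}
    (hq : IsSumSq (q e.2.1 - r)) :
    IsSumSq (C τ * iterationStep A E τ q p e.2.1 - substMat (A e.2.2) (p e.1) - C τ * r) := by
  have hCτ : (C τ : MvPolynomial (Fin n) ℝ) * C τ⁻¹ = 1 := by
    rw [← map_mul, mul_inv_cancel₀ hτ.ne', map_one]
  have he' : e ∈ E.filter fun e' => e'.2.1 = e.2.1 := Finset.mem_filter.mpr ⟨he, rfl⟩
  rw [iterationStep, ← Finset.add_sum_erase _ _ he']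
  have key : C τ * (q e.2.1 + C τ⁻¹ * (substMat (A e.2.2) (p e.1)
        + ∑ e' ∈ (E.filter fun e' => e'.2.1 = e.2.1).erase e, substMat (A e'.2.2) (p e'.1)))
        - substMat (A e.2.2) (p e.1) - C τ * r
      = C τ * (q e.2.1 - r)
        + ∑ e' ∈ (E.filter fun e' => e'.2.1 = e.2.1).erase e, substMat (A e'.2.2) (p e'.1) := by
    linear_combination (substMat (A e.2.2) (p e.1)
      + ∑ e' ∈ (E.filter fun e' => e'.2.1 = e.2.1).erase e, substMat (A e'.2.2) (p e'.1)) * hCτ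
  rw [key]
  exact (isSumSq_C_mul hτ.le hq).add (IsSumSq.sum fun e' _ => (hp e'.1).substMat _)

variable {P : ℕ → V → MvPolynomial (Fin n) ℝ}

theorem isHomogeneous_of_iterate (hP0 : ∀ v, P 0 v = 0)
    (hPs : ∀ k v, P (k + 1) v = iterationStep A E τ q (P k) v) {N : ℕ}
    (hq : ∀ v, (q v).IsHomogeneous N) (k : ℕ) (v : V) :
    (P k v).IsHomogeneous N := by
  induction k generalizing v with
  | zero => simp [hP0, isHomogeneous_zero]
  | succ k ih => exact hPs k v ▸ iterationStep_isHomogeneous hq ih v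

theorem isSumSq_of_iterate (hP0 : ∀ v, P 0 v = 0)
    (hPs : ∀ k v, P (k + 1) v = iterationStep A E τ q (P k) v) (hτ : 0 ≤ τ)
    (hq : ∀ v, IsSumSq (q v)) (k : ℕ) (v : V) :
    IsSumSq (P k v) := by
  induction k generalizing v with
  | zero => simp [hP0, IsSumSq.zero]
  | succ k ih => simpa [hPs] using isSumSq_iterationStep_sub hτ ih (r := 0) (by simpa using hq v)

end Iteration

theorem iteration_limit_sos_general {m n : ℕ} (A : Fin m → Matrix (Fin n) (Fin n) ℝ)
    {V : Type*} (E : Finset (V × V × Fin m))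
    (d : ℕ) (τ : ℝ) (hτ : 0 < τ) (q : V → MvPolynomial (Fin n) ℝ)
    (hqhom : ∀ v, (q v).IsHomogeneous (2 * d)) (hqint : ∀ v, InIntSOS d (q v))
    (P : ℕ → V → MvPolynomial (Fin n) ℝ)
    (hP0 : ∀ v, P 0 v = 0)
    (hPs : ∀ k v, P (k+1) v = q v +
      MvPolynomial.C τ⁻¹ *
        ∑ e ∈ E.filter (fun e => e.2.1 = v), substMat (A e.2.2) (P k e.1))
    (Pinf : V → MvPolynomial (Fin n) ℝ)
    (hconv : ∀ v (mon : Fin n →₀ ℕ),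
      Tendsto (fun k => MvPolynomial.coeff mon (P k v)) atTop
        (nhds (MvPolynomial.coeff mon (Pinf v)))) :
    (∀ v, IsSOS (Pinf v)) ∧ (∀ v, InIntSOS d (Pinf v)) ∧
    ∀ e ∈ E, IsSOS (MvPolynomial.C τ * Pinf e.2.1 - substMat (A e.2.2) (Pinf e.1)) := by
  choose ε hε hq using fun v => inIntSOS_iff.mp (hqint v)
  have hhom := isHomogeneous_of_iterate hP0 hPs hqhom
  have hsos := isSumSq_of_iterate hP0 hPs hτ.le
    fun v => isSumSq_of_isSumSq_sub_C_mul (hε v).le (hq v)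
  have hconv' : ∀ v, TendstoCoeff (fun k => P (k + 1) v) atTop (Pinf v) :=
    fun v => TendstoCoeff.comp (hconv v) (tendsto_add_atTop_nat 1)
  have hint : ∀ v, InIntSOS d (Pinf v) := fun v => inIntSOS_iff.mpr ⟨_, half_pos (hε v),
    (hconv' v).isSumSq_sub_C_mul (fun k => hhom _ v) (hε v)
      fun k => hPs k v ▸ isSumSq_iterationStep_sub hτ.le (hsos k) (hq v)⟩
  refine ⟨fun v => (hint v).isSOS, hint, fun e he => isSOS_iff_isSumSq.mpr ?_⟩
  have hedge := ((hconv' e.2.1).C_mul τ).sub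
    (TendstoCoeff.linearMap (substMatLinearMap (A e.2.2)) (hconv e.1) (hhom · e.1))
  refine isSumSq_of_isSumSq_sub_C_mul (half_pos (mul_pos hτ (hε e.2.1))).le
    (hedge.isSumSq_sub_C_mul (fun k => ((hhom _ _).C_mul τ).sub ((hhom k e.1).substMat _))
      (mul_pos hτ (hε e.2.1)) fun k => ?_)
  rw [C_mul, mul_assoc, hPs]
  exact isSumSq_C_mul_iterationStep_sub_substMat hτ (hsos k) he (hq e.2.1)

/-- for `τ > 0` and homogeneous degree-`2d` polynomials `q_v` in the interior
of the SOS cone, if the iteration `p_{v,0} = 0`,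
`p_{v,k+1}(x) = q_v(x) + (1/τ) Σ_{(u,v,σ)∈E} p_{u,k}(A_σ x)` converges coefficientwise to
polynomials `p_{v,∞}`, then each `p_{v,∞}` is SOS, lies in the interior of the SOS cone,
and `τ·p_{v,∞}(x) − p_{u,∞}(A_σ x)` is SOS for every edge `(u,v,σ) ∈ E`. -/
theorem iteration_limit_sos {m n : ℕ} (A : Fin m → Matrix (Fin n) (Fin n) ℝ)
    {V : Type*} [Fintype V] (E : Finset (V × V × Fin m))
    (d : ℕ) (τ : ℝ) (hτ : 0 < τ) (q : V → MvPolynomial (Fin n) ℝ)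
    (hqhom : ∀ v, (q v).IsHomogeneous (2 * d)) (hqint : ∀ v, InIntSOS d (q v))
    (P : ℕ → V → MvPolynomial (Fin n) ℝ)
    (hP0 : ∀ v, P 0 v = 0)
    (hPs : ∀ k v, P (k+1) v = q v +
      MvPolynomial.C τ⁻¹ *
        ∑ e ∈ E.filter (fun e => e.2.1 = v), substMat (A e.2.2) (P k e.1))
    (Pinf : V → MvPolynomial (Fin n) ℝ)
    (hconv : ∀ v (mon : Fin n →₀ ℕ),
      Tendsto (fun k => MvPolynomial.coeff mon (P k v)) atTop
        (nhds (MvPolynomial.coeff mon (Pinf v)))) :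
    (∀ v, IsSOS (Pinf v)) ∧ (∀ v, InIntSOS d (Pinf v)) ∧
    ∀ e ∈ E, IsSOS (MvPolynomial.C τ * Pinf e.2.1 - substMat (A e.2.2) (Pinf e.1)) :=
  iteration_limit_sos_general A E d τ hτ q hqhom hqint P hP0 hPs Pinf hconv
end
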